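/- Let G^{A,B} be a biconed graph and T any spanning tree of G^{A,B}. Then every edge of T that does not belong to T_0 is internally passive in T. -/

import Mathlib

/-!
Formalization scaffold for "h-vectors of graphic matroids of biconed graphs".

A graph `G` (loops and parallel edges allowed) with vertex set `A ∪ B` is
modelled by an abstract finite edge type `E` with an endpoint map
`ends : E → Sym2 (Fin m ⊕ₗ Fin n)`, where `A = Fin m = {1,…,m}`,
`Ā = B \ A = Fin n = {1̄,…,n̄}` and the finset `S ⊆ Fin m` records `A ∩ B`
(so `B = S ∪ Ā`).  The biconing `G^{A,B}` adds the two vertices `0` and `0̄`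
and the edges `00̄`, `0a (a ∈ A)` and `0̄b (b ∈ B)`.
-/

namespace BiconedPaper

noncomputable section
open scoped Classical

/-! ### Walks in multigraphs presented by an endpoint map -/

/-- A walk in the multigraph with edge set `ε` and endpoint map `ends`. -/
inductive MWalk {ε ν : Type} (ends : ε → Sym2 ν) : ν → ν → Type
  | nil (u : ν) : MWalk ends u u
  | cons {u w : ν} (e : ε) (v : ν) (h : ends e = s(u, v)) (p : MWalk ends v w) :
      MWalk ends u w

namespace MWalk

variable {ε ν : Type} {ends : ε → Sym2 ν}

/-- The list of edges traversed by a walk. -/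
def edges : ∀ {u v : ν}, MWalk ends u v → List ε
  | _, _, nil _ => []
  | _, _, cons e _ _ p => e :: p.edges

/-- The list of vertices visited by a walk. -/
def support : ∀ {u v : ν}, MWalk ends u v → List ν
  | u, _, nil _ => [u]
  | u, _, cons _ _ _ p => u :: p.support

/-- A walk is a path if it visits no vertex twice. -/
def IsPath {u v : ν} (p : MWalk ends u v) : Prop := p.support.Nodup

/-- All edges of the walk belong to the edge set `F`. -/
def edgesIn {u v : ν} (p : MWalk ends u v) (F : Finset ε) : Prop :=
  ∀ e ∈ p.edges, e ∈ F

/-- The number of "bridging" edges traversed by a walk, i.e. steps whose two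
endpoints lie on different sides according to `sideF`. -/
def bridgeCount (sideF : ν → Bool) : ∀ {u v : ν}, MWalk ends u v → ℕ
  | _, _, nil _ => 0
  | u, _, cons _ v' _ p => (if sideF u = sideF v' then 0 else 1) + p.bridgeCount sideF

end MWalk

/-- `u` and `v` are joined by a walk all of whose edges lie in `F`. -/
def Reachable {ε ν : Type} (ends : ε → Sym2 ν) (F : Finset ε) (u v : ν) : Prop :=
  ∃ p : MWalk ends u v, p.edgesIn F

/-- An edge set is acyclic (a forest) iff removing any one of its edges
disconnects the endpoints of that edge.  (In particular no loops and no
parallel pairs.) -/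
def IsAcyclic {ε ν : Type} [DecidableEq ε] (ends : ε → Sym2 ν) (F : Finset ε) : Prop :=
  ∀ e ∈ F, ∀ u v : ν, ends e = s(u, v) → ¬ Reachable ends (F.erase e) u v

/-- A spanning tree: an acyclic edge set connecting every pair of vertices. -/
def IsSpanningTree {ε ν : Type} [DecidableEq ε] (ends : ε → Sym2 ν) (T : Finset ε) : Prop :=
  IsAcyclic ends T ∧ ∀ u v : ν, Reachable ends T u v

/-! ### Biconed graphs -/

/-- The data of a biconed graph `G^{A,B}`:  the graph `G` has vertex set
`A ∪ B` with `A = Fin m`, `Ā = B \ A = Fin n`, `A ∩ B = S`, and abstract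
edge set `E` (so loops and parallel edges are allowed). -/
structure BiconedGraph where
  m : ℕ
  n : ℕ
  E : Type
  fintypeE : Fintype E
  decEqE : DecidableEq E
  ends : E → Sym2 (Fin m ⊕ₗ Fin n)
  S : Finset (Fin m)

namespace BiconedGraph

variable (P : BiconedGraph)

instance : Fintype P.E := P.fintypeE
instance : DecidableEq P.E := P.decEqE

/-- The vertices of `G`, linearly ordered `1 < ⋯ < m < 1̄ < ⋯ < n̄`. -/
abbrev VG := Fin P.m ⊕ₗ Fin P.n

/-- The vertices of `G^{A,B}_red`:  `⊥` is the vertex `0̄`, ordered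
`0̄ < 1 < ⋯ < m < 1̄ < ⋯ < n̄`. -/
abbrev Vred := WithBot P.VG

/-- The vertices of `G^{A,B}`: `⊥` is `0`, ordered `0 < 0̄ < 1 < ⋯ < n̄`. -/
abbrev W := WithBot P.Vred

/-- The vertex `a ∈ A`. -/
def aVert (a : Fin P.m) : P.VG := toLex (Sum.inl a)
/-- The vertex `b ∈ Ā`. -/
def bVert (b : Fin P.n) : P.VG := toLex (Sum.inr b)
/-- Inclusion of the vertices of `G` into those of `G^{A,B}_red`. -/
def liftV (x : P.VG) : P.Vred := (x : WithBot P.VG)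
/-- Inclusion of the vertices of `G^{A,B}_red` into those of `G^{A,B}`. -/
def liftW (x : P.Vred) : P.W := (x : WithBot P.Vred)

/-- The edges of the biconed graph `G^{A,B}`:  the edge `00̄`, the coning
edges `0a (a ∈ A)`, `0̄b (b ∈ Ā)`, `0̄a (a ∈ A ∩ B)`, and the edges of `G`. -/
abbrev EB := Unit ⊕ (Fin P.m ⊕ (Fin P.n ⊕ ({a : Fin P.m // a ∈ P.S} ⊕ P.E)))

/-- The edge `00̄`. -/
abbrev e00 : P.EB := Sum.inl ()
/-- The coning edge `0a`, `a ∈ A`. -/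
abbrev eA (a : Fin P.m) : P.EB := Sum.inr (Sum.inl a)
/-- The coning edge `0̄b`, `b ∈ Ā`. -/
abbrev eB (b : Fin P.n) : P.EB := Sum.inr (Sum.inr (Sum.inl b))
/-- The coning edge `0̄a`, `a ∈ A ∩ B`. -/
abbrev eS (a : {a : Fin P.m // a ∈ P.S}) : P.EB := Sum.inr (Sum.inr (Sum.inr (Sum.inl a)))
/-- An original edge of `G`. -/
abbrev eG (e : P.E) : P.EB := Sum.inr (Sum.inr (Sum.inr (Sum.inr e)))

/-- The endpoint map of `G^{A,B}`. -/
def endsB : P.EB → Sym2 P.W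
  | Sum.inl _ => s((⊥ : P.W), P.liftW ⊥)
  | Sum.inr (Sum.inl a) => s((⊥ : P.W), P.liftW (P.liftV (P.aVert a)))
  | Sum.inr (Sum.inr (Sum.inl b)) => s(P.liftW ⊥, P.liftW (P.liftV (P.bVert b)))
  | Sum.inr (Sum.inr (Sum.inr (Sum.inl a))) => s(P.liftW ⊥, P.liftW (P.liftV (P.aVert a.1)))
  | Sum.inr (Sum.inr (Sum.inr (Sum.inr e))) => (P.ends e).map fun x => P.liftW (P.liftV x)

/-- The spanning tree `T₀`, consisting of `00̄`, the edges `0a (a ∈ A)` and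
the edges `0̄b (b ∈ Ā)`. -/
def T0 : Finset P.EB :=
  Finset.univ.filter fun e => match e with
    | Sum.inl _ => True
    | Sum.inr (Sum.inl _) => True
    | Sum.inr (Sum.inr (Sum.inl _)) => True
    | _ => False

/-- The edges of `G^{A,B}_red` (delete the edges of `T₀` and the vertex `0`):
the edges `0̄a (a ∈ A ∩ B)` together with the edges of `G`. -/
abbrev Ered := {a : Fin P.m // a ∈ P.S} ⊕ P.E

/-- The endpoint map of `G^{A,B}_red`; `⊥` is the vertex `0̄`. -/
def endsRed : P.Ered → Sym2 P.Vred
  | Sum.inl a => s((⊥ : P.Vred), P.liftV (P.aVert a.1))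
  | Sum.inr e => (P.ends e).map P.liftV

/-- Inclusion of the edges of `G^{A,B}_red` into those of `G^{A,B}`. -/
def redToEB : P.Ered → P.EB
  | Sum.inl a => P.eS a
  | Sum.inr e => P.eG e

/-- The edge set `T \ T₀` of `T`, viewed inside `G^{A,B}_red`. -/
def redOf (T : Finset P.EB) : Finset P.Ered :=
  Finset.univ.filter fun e => P.redToEB e ∈ T

/-- `true` on the vertices of `A`, `false` on the vertices of `Ā ∪ {0̄}`. -/
def side : P.Vred → Bool :=
  WithBot.recBotCoe false fun x => Sum.elim (fun _ => true) (fun _ => false) (ofLex x)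

/-- The vertex lies in `A`. -/
def InA (v : P.Vred) : Prop := ∃ a : Fin P.m, v = P.liftV (P.aVert a)

/-- An edge of `G^{A,B}_red` is bridging if it joins a vertex of `A` to a
vertex of `Ā ∪ {0̄}`. -/
def BridgingE (e : P.Ered) : Prop :=
  ∃ u v : P.Vred, P.endsRed e = s(u, v) ∧ P.side u ≠ P.side v

/-! ### 2-edge-rooted forests -/

/-- The underlying edge set `F` of the multiset of edges given by the
multiplicity function `mult` (an edge `e` carries `mult e - 1` edge roots). -/
def mSupport (mult : P.Ered → ℕ) : Finset P.Ered :=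
  Finset.univ.filter fun e => mult e ≠ 0

/-- The degree of the multiset of edges given by `mult`. -/
def deg (mult : P.Ered → ℕ) : ℕ := ∑ e : P.Ered, mult e

/-- Edge `e` meets the connected component of `v` in the edge set `F`. -/
def Touches (F : Finset P.Ered) (v : P.Vred) (e : P.Ered) : Prop :=
  ∃ u : P.Vred, u ∈ P.endsRed e ∧ Reachable P.endsRed F v u

/-- The total number of edge roots in the component of `v`. -/
def compEdgeRoots (mult : P.Ered → ℕ) (v : P.Vred) : ℕ :=
  ∑ e ∈ P.mSupport mult, if P.Touches (P.mSupport mult) v e then mult e - 1 else 0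

/-- The component of `v` is `compCount`-edge-rooted:  the number of its edge
roots, plus `1` if it contains the vertex `0̄`. -/
def compCount (mult : P.Ered → ℕ) (v : P.Vred) : ℕ :=
  P.compEdgeRoots mult v +
    if Reachable P.endsRed (P.mSupport mult) v (⊥ : P.Vred) then 1 else 0

/-- Condition (C3) for the `2`-edge-rooted component of `v`:  the unique
shortest path containing both edge roots (resp. the vertex `0̄` and the edge
root, if the component contains `0̄`) has an odd number of bridging edges.
The shortest path containing two edges is the unique path whose first and
last edges are the two rooted edges; if the two edge roots lie on one common
edge (`mult e = 3`) the path is that single edge. -/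
def C3At (mult : P.Ered → ℕ) (v : P.Vred) : Prop :=
  (Reachable P.endsRed (P.mSupport mult) v (⊥ : P.Vred) →
    ∃ (x : P.Vred) (p : MWalk P.endsRed (⊥ : P.Vred) x),
      p.IsPath ∧ p.edgesIn (P.mSupport mult) ∧
      (∃ e, p.edges.getLast? = some e ∧ 2 ≤ mult e) ∧
      Odd (p.bridgeCount P.side)) ∧
  (¬ Reachable P.endsRed (P.mSupport mult) v (⊥ : P.Vred) →
    ∃ (x y : P.Vred) (p : MWalk P.endsRed x y),
      p.IsPath ∧ p.edgesIn (P.mSupport mult) ∧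
      Reachable P.endsRed (P.mSupport mult) v x ∧
      (∃ e, p.edges.head? = some e ∧ 2 ≤ mult e) ∧
      (∃ e, p.edges.getLast? = some e ∧ 2 ≤ mult e) ∧
      (∀ e, p.edges = [e] → mult e = 3) ∧
      Odd (p.bridgeCount P.side))

/-- `mult : Ered → ℕ` is (the multiplicity function of) a 2-edge-rooted
forest of `G^{A,B}_red`:
(C0) its support is a spanning forest;
(C1) at most one component is `2`-edge-rooted;
(C2) every other component is `0`- or `1`-edge-rooted;
(C3) the parity condition on the path joining the two roots. -/
def Is2ERF (mult : P.Ered → ℕ) : Prop :=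
  IsAcyclic P.endsRed (P.mSupport mult) ∧
  (∀ v : P.Vred, P.compCount mult v ≤ 2) ∧
  (∀ u v : P.Vred, P.compCount mult u = 2 → P.compCount mult v = 2 →
    Reachable P.endsRed (P.mSupport mult) u v) ∧
  (∀ v : P.Vred, P.compCount mult v = 2 → P.C3At mult v)

/-! ### Birooted forests -/

/-- `(F, R)` is a birooted forest of `G^{A,B}_red`:  `F` is a spanning forest,
the root set `R` contains `0̄`, every component of `F` contains at least one
root, no component contains three roots, at most one component contains two
roots, and a component with two roots has one root in `A` and the other in
`Ā ∪ {0̄}`. -/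
def IsBirootedForest (F : Finset P.Ered) (R : Set P.Vred) : Prop :=
  IsAcyclic P.endsRed F ∧
  (⊥ : P.Vred) ∈ R ∧
  (∀ v : P.Vred, ∃ r ∈ R, Reachable P.endsRed F v r) ∧
  (∀ r₁ ∈ R, ∀ r₂ ∈ R, ∀ r₃ ∈ R, r₁ ≠ r₂ → r₁ ≠ r₃ → r₂ ≠ r₃ →
    Reachable P.endsRed F r₁ r₂ → Reachable P.endsRed F r₁ r₃ → False) ∧
  (∀ r₁ ∈ R, ∀ r₂ ∈ R, ∀ r₃ ∈ R, ∀ r₄ ∈ R, r₁ ≠ r₂ → r₃ ≠ r₄ →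
    Reachable P.endsRed F r₁ r₂ → Reachable P.endsRed F r₃ r₄ →
    Reachable P.endsRed F r₁ r₃) ∧
  (∀ r₁ ∈ R, ∀ r₂ ∈ R, r₁ ≠ r₂ → Reachable P.endsRed F r₁ r₂ →
    (P.InA r₁ ∧ ¬ P.InA r₂) ∨ (P.InA r₂ ∧ ¬ P.InA r₁))

/-! ### Internal activity and the edge order -/

/-- `e` is internally passive in the spanning tree `T`:  it can be exchanged
for a strictly smaller edge `f` so that the result is again a spanning tree. -/
def InternallyPassive (ord : LinearOrder P.EB) (T : Finset P.EB) (e : P.EB) : Prop :=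
  e ∈ T ∧ ∃ f : P.EB, ord.lt f e ∧ IsSpanningTree P.endsB (insert f (T.erase e))

/-- `e` is internally active in the spanning tree `T`. -/
def InternallyActive (ord : LinearOrder P.EB) (T : Finset P.EB) (e : P.EB) : Prop :=
  e ∈ T ∧ ¬ ∃ f : P.EB, ord.lt f e ∧ IsSpanningTree P.endsB (insert f (T.erase e))

/-- The number of internally passive edges of `T`. -/
def ipCount (ord : LinearOrder P.EB) (T : Finset P.EB) : ℕ :=
  (T.filter fun e => P.InternallyPassive ord T e).card

/-- The smaller endpoint of an edge of `G^{A,B}`. -/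
def endMin (e : P.EB) : P.W := Sym2.lift ⟨fun a b => a ⊓ b, fun a b => inf_comm a b⟩ (P.endsB e)
/-- The larger endpoint of an edge of `G^{A,B}`. -/
def endMax (e : P.EB) : P.W := Sym2.lift ⟨fun a b => a ⊔ b, fun a b => sup_comm a b⟩ (P.endsB e)

/-- The endpoints of an edge, as an ordered pair in the lexicographic square
of the vertex order `0 < 0̄ < 1 < ⋯ < m < 1̄ < ⋯ < n̄`. -/
def lexEnds (e : P.EB) : P.W ×ₗ P.W := toLex (P.endMin e, P.endMax e)

/-- A linear order on the edges of `G^{A,B}` is admissible if it refines the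
lexicographic order on endpoints (so parallel edges are ordered arbitrarily). -/
def AdmissibleOrder (ord : LinearOrder P.EB) : Prop :=
  ∀ e f : P.EB, P.lexEnds e < P.lexEnds f → ord.lt e f

/-- `v` is a connecting vertex of `T`:  `v ∈ A` and `v` is adjacent to `0` in
`T`, or `v ∈ Ā` and `v` is adjacent to `0̄` in `T`. -/
def ConnVertex (T : Finset P.EB) (v : P.Vred) : Prop :=
  (∃ a : Fin P.m, v = P.liftV (P.aVert a) ∧ P.eA a ∈ T) ∨
  (∃ b : Fin P.n, v = P.liftV (P.bVert b) ∧ P.eB b ∈ T)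

/-- `e` is a connecting edge of `T` (an edge `0a`, `a ∈ A`, or `0̄b`, `b ∈ Ā`)
with connecting vertex `v`. -/
def ConnEdge (T : Finset P.EB) (e : P.EB) (v : P.Vred) : Prop :=
  e ∈ T ∧ ((∃ a : Fin P.m, e = P.eA a ∧ v = P.liftV (P.aVert a)) ∨
           (∃ b : Fin P.n, e = P.eB b ∧ v = P.liftV (P.bVert b)))

/-! ### The h-vector -/

/-- `f_{i-1}`:  the number of acyclic edge sets of cardinality `i` in `G^{A,B}`. -/
def numAcyclic (i : ℕ) : ℕ :=
  Nat.card {F : Finset P.EB // IsAcyclic P.endsB F ∧ F.card = i}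

/-- The rank of the graphic matroid of `G^{A,B}`:  `|V| - 1 = m + n + 1`. -/
def d : ℕ := P.m + P.n + 1

/-- `h` is the h-vector of the graphic matroid of `G^{A,B}`:  it satisfies
`Σ_{i=0}^{d} f_{i-1} (t-1)^{d-i} = Σ_{k=0}^{d} h_k t^{d-k}`. -/
def IsHVector (h : ℕ → ℤ) : Prop :=
  ∑ i ∈ Finset.range (P.d + 1),
      Polynomial.C ((P.numAcyclic i : ℤ)) * (Polynomial.X - 1) ^ (P.d - i)
    = ∑ k ∈ Finset.range (P.d + 1), Polynomial.C (h k) * Polynomial.X ^ (P.d - k)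

end BiconedGraph

/-- `(h 0, …, h d)` is a pure O-sequence:  there is a multicomplex `M` of
multisets on a finite ground set (nonempty, closed under sub-multisets), all
of whose inclusion-maximal members have the same cardinality, whose members
all have cardinality at most `d`, and which has exactly `h i` members of
cardinality `i` for every `i ≤ d`. -/
def IsPureOSeq (d : ℕ) (h : ℕ → ℤ) : Prop :=
  ∃ (N : ℕ) (M : Set (Multiset (Fin N))),
    M.Nonempty ∧
    (∀ s ∈ M, ∀ t : Multiset (Fin N), t ≤ s → t ∈ M) ∧
    (∀ s ∈ M, ∀ t ∈ M, (∀ u ∈ M, s ≤ u → u = s) → (∀ u ∈ M, t ≤ u → u = t) →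
      Multiset.card s = Multiset.card t) ∧
    (∀ s ∈ M, Multiset.card s ≤ d) ∧
    (∀ i ≤ d, (Nat.card {s : Multiset (Fin N) // s ∈ M ∧ Multiset.card s = i} : ℤ) = h i)

/-!
Deleting an edge `e = uv` from a spanning tree `T` leaves two components, one around `u`
and one around `v`, and any edge `f` joining them makes `(T ∖ e) ∪ f` a spanning tree again;
so `e` is internally passive as soon as such an `f` has an endpoint smaller than both
endpoints of `e`. If `e ∉ T₀`, both endpoints of `e` are larger than `0`. Let `y` be an
endpoint of `e` that is not in the component of `0`. If `y = 0̄`, take `f = 00̄`; if `y ∈ A`,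
take `f = 0y`. If `y ∈ Ā`, then `e` is an edge of `G` (an edge `0̄a` has its other endpoint
in `A`), so both its endpoints are larger than `0̄`: take `f = 0̄y` if `0̄` is not in the
component of `y`, and `f = 00̄` otherwise.
-/

section Multigraph

variable {ε ν : Type} {ends : ε → Sym2 ν}

def Adj (ends : ε → Sym2 ν) (F : Finset ε) (u v : ν) : Prop :=
  ∃ e ∈ F, ends e = s(u, v)

instance (F : Finset ε) : Std.Symm (Adj ends F) :=
  ⟨fun _ _ ⟨e, he, h⟩ => ⟨e, he, h.trans Sym2.eq_swap⟩⟩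

theorem MWalk.edgesIn_cons {F : Finset ε} {u v w : ν} {e : ε} {h : ends e = s(u, v)}
    {p : MWalk ends v w} : (MWalk.cons e v h p).edgesIn F ↔ e ∈ F ∧ p.edgesIn F := by
  simp [MWalk.edgesIn, MWalk.edges]

theorem reachable_iff_reflTransGen {F : Finset ε} {u v : ν} :
    Reachable ends F u v ↔ Relation.ReflTransGen (Adj ends F) u v := by
  constructor
  · rintro ⟨p, hp⟩
    induction p with
    | nil => exact .refl
    | cons e v h p ih =>
      rw [MWalk.edgesIn_cons] at hp
      exact .head ⟨e, hp.1, h⟩ (ih hp.2)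
  · intro h
    induction h using Relation.ReflTransGen.head_induction_on with
    | refl => exact ⟨.nil _, by simp [MWalk.edgesIn, MWalk.edges]⟩
    | head hadj _ ih =>
      obtain ⟨e, he, h⟩ := hadj
      obtain ⟨p, hp⟩ := ih
      exact ⟨.cons e _ h p, MWalk.edgesIn_cons.mpr ⟨he, hp⟩⟩

namespace Reachable

variable {F F' : Finset ε} {u v w : ν}

theorem refl : Reachable ends F u u :=
  reachable_iff_reflTransGen.mpr .refl

theorem trans (h₁ : Reachable ends F u v) (h₂ : Reachable ends F v w) :
    Reachable ends F u w :=
  reachable_iff_reflTransGen.mpr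
    ((reachable_iff_reflTransGen.mp h₁).trans (reachable_iff_reflTransGen.mp h₂))

theorem symm (h : Reachable ends F u v) : Reachable ends F v u :=
  reachable_iff_reflTransGen.mpr
    (Std.Symm.symm _ _ (reachable_iff_reflTransGen.mp h))

theorem mono (hF : F ⊆ F') (h : Reachable ends F u v) : Reachable ends F' u v :=
  reachable_iff_reflTransGen.mpr
    (Relation.ReflTransGen.mono (fun _ _ ⟨e, he, h⟩ => ⟨e, hF he, h⟩) _ _
      (reachable_iff_reflTransGen.mp h))

theorem of_mem {e : ε} (he : e ∈ F) (h : ends e = s(u, v)) : Reachable ends F u v :=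
  reachable_iff_reflTransGen.mpr (.single ⟨e, he, h⟩)

end Reachable

variable [DecidableEq ε]

theorem Reachable.erase_or {T : Finset ε} {e : ε} {u v w : ν} (h : Reachable ends T w u)
    (he : ends e = s(u, v)) :
    Reachable ends (T.erase e) w u ∨ Reachable ends (T.erase e) w v := by
  replace h := reachable_iff_reflTransGen.mp h
  induction h using Relation.ReflTransGen.head_induction_on with
  | refl => exact Or.inl .refl
  | @head a c hadj _ ih =>
    obtain ⟨g, hg, hgends⟩ := hadj
    by_cases hge : g = e
    · subst hge
      rcases Sym2.eq_iff.mp (he.symm.trans hgends) with ⟨rfl, -⟩ | ⟨-, rfl⟩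
      · exact Or.inl .refl
      · exact Or.inr .refl
    · have hac : Reachable ends (T.erase e) a c :=
        .of_mem (Finset.mem_erase.mpr ⟨hge, hg⟩) hgends
      exact ih.imp hac.trans hac.trans

theorem Reachable.insert_or {S : Finset ε} {f : ε} {x y p q : ν} (hf : ends f = s(x, y))
    (h : Reachable ends (insert f S) p q) :
    Reachable ends S p q ∨ (Reachable ends S p x ∧ Reachable ends S y q) ∨
      (Reachable ends S p y ∧ Reachable ends S x q) := by
  replace h := reachable_iff_reflTransGen.mp h
  induction h with
  | refl => exact Or.inl .refl
  | @tail b c _ hadj ih =>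
    obtain ⟨g, hg, hgends⟩ := hadj
    rcases Finset.mem_insert.mp hg with rfl | hgS
    · rcases Sym2.eq_iff.mp (hf.symm.trans hgends) with ⟨rfl, rfl⟩ | ⟨rfl, rfl⟩
      · rcases ih with h | ⟨h₁, h₂⟩ | ⟨h₁, -⟩
        · exact Or.inr (Or.inl ⟨h, .refl⟩)
        · exact Or.inl (h₁.trans h₂.symm)
        · exact Or.inl h₁
      · rcases ih with h | ⟨h₁, -⟩ | ⟨h₁, h₂⟩
        · exact Or.inr (Or.inr ⟨h, .refl⟩)
        · exact Or.inl h₁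
        · exact Or.inl (h₁.trans h₂.symm)
    · have hbc : Reachable ends S b c := .of_mem hgS hgends
      rcases ih with h | ⟨h₁, h₂⟩ | ⟨h₁, h₂⟩
      · exact Or.inl (h.trans hbc)
      · exact Or.inr (Or.inl ⟨h₁, h₂.trans hbc⟩)
      · exact Or.inr (Or.inr ⟨h₁, h₂.trans hbc⟩)

theorem IsAcyclic.subset {F T : Finset ε} (hT : IsAcyclic ends T) (hFT : F ⊆ T) :
    IsAcyclic ends F :=
  fun g hg p q hpq hreach =>
    hT g (hFT hg) p q hpq (hreach.mono (Finset.erase_subset_erase g hFT))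

theorem IsAcyclic.insert {F : Finset ε} (hF : IsAcyclic ends F) {f : ε} {x y : ν}
    (hf : ends f = s(x, y)) (hxy : ¬ Reachable ends F x y) : IsAcyclic ends (insert f F) := by
  have hfF : f ∉ F := fun h => hxy (.of_mem h hf)
  intro g hg p q hpq hreach
  rcases Finset.mem_insert.mp hg with rfl | hgF
  · rw [Finset.erase_insert hfF] at hreach
    rcases Sym2.eq_iff.mp (hf.symm.trans hpq) with ⟨rfl, rfl⟩ | ⟨rfl, rfl⟩
    · exact hxy hreach
    · exact hxy hreach.symm
  · have hgf : f ≠ g := by rintro rfl; exact hfF hgF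
    rw [Finset.erase_insert_of_ne hgf] at hreach
    have hpqF : Reachable ends F p q := .of_mem hgF hpq
    have hsub := Finset.erase_subset g F
    rcases hreach.insert_or hf with h | ⟨h₁, h₂⟩ | ⟨h₁, h₂⟩
    · exact hF g hgF p q hpq h
    · exact hxy (((h₁.mono hsub).symm.trans hpqF).trans (h₂.mono hsub).symm)
    · exact hxy ((h₂.mono hsub).trans (hpqF.symm.trans (h₁.mono hsub)))

theorem IsSpanningTree.exchange {T : Finset ε} (hT : IsSpanningTree ends T) {e f : ε}
    {u v x y : ν} (he : ends e = s(u, v)) (hf : ends f = s(x, y))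
    (hxy : ¬ Reachable ends (T.erase e) x y) :
    IsSpanningTree ends (insert f (T.erase e)) := by
  refine ⟨(hT.1.subset (Finset.erase_subset e T)).insert hf hxy, ?_⟩
  have hsub : T.erase e ⊆ insert f (T.erase e) := Finset.subset_insert _ _
  have hside : ∀ w, Reachable ends (T.erase e) w u ∨ Reachable ends (T.erase e) w v :=
    fun w => (hT.2 w u).erase_or he
  have hf' : Reachable ends (insert f (T.erase e)) x y := .of_mem (Finset.mem_insert_self _ _) hf
  have huv : Reachable ends (insert f (T.erase e)) u v := by
    rcases hside x with hx | hx <;> rcases hside y with hy | hy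
    · exact absurd (hx.trans hy.symm) hxy
    · exact ((hx.mono hsub).symm.trans hf').trans (hy.mono hsub)
    · exact ((hy.mono hsub).symm.trans hf'.symm).trans (hx.mono hsub)
    · exact absurd (hx.trans hy.symm) hxy
  have hu : ∀ w, Reachable ends (insert f (T.erase e)) w u := fun w =>
    (hside w).elim (·.mono hsub) fun h => (h.mono hsub).trans huv.symm
  exact fun w z => (hu w).trans (hu z).symm

end Multigraph

namespace BiconedGraph

variable (P : BiconedGraph)

theorem endsB_e00 : P.endsB P.e00 = s((⊥ : P.W), P.liftW ⊥) := rfl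

theorem endsB_eA (a : Fin P.m) :
    P.endsB (P.eA a) = s((⊥ : P.W), P.liftW (P.liftV (P.aVert a))) := rfl

theorem endsB_eB (b : Fin P.n) :
    P.endsB (P.eB b) = s(P.liftW ⊥, P.liftW (P.liftV (P.bVert b))) := rfl

theorem endsB_eS (a : {a : Fin P.m // a ∈ P.S}) :
    P.endsB (P.eS a) = s(P.liftW ⊥, P.liftW (P.liftV (P.aVert a.1))) := rfl

theorem endsB_eG {e : P.E} {x y : P.VG} (h : P.ends e = s(x, y)) :
    P.endsB (P.eG e) = s(P.liftW (P.liftV x), P.liftW (P.liftV y)) := by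
  rw [endsB, h, Sym2.map_mk]

theorem bot_lt_liftW (v : P.Vred) : (⊥ : P.W) < P.liftW v := WithBot.bot_lt_coe v

theorem liftW_bot_lt_liftW_liftV (x : P.VG) : P.liftW ⊥ < P.liftW (P.liftV x) :=
  WithBot.coe_lt_coe.mpr (WithBot.bot_lt_coe x)

theorem lexEnds_lt_of_lt_of_lt {e f : P.EB} {u v x y : P.W} (he : P.endsB e = s(u, v))
    (hf : P.endsB f = s(x, y)) (hu : x < u) (hv : x < v) : P.lexEnds f < P.lexEnds e := by
  refine Prod.Lex.lt_iff.mpr (Or.inl ?_)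
  change P.endMin f < P.endMin e
  simp only [endMin, hf, he, Sym2.lift_mk]
  refine inf_le_left.trans_lt ?_
  rcases le_total u v with h | h
  · rwa [inf_eq_left.mpr h]
  · rwa [inf_eq_right.mpr h]

variable {P} {ord : LinearOrder P.EB} (hord : P.AdmissibleOrder ord) {T : Finset P.EB}
  (hT : IsSpanningTree P.endsB T)
include hord hT

theorem internallyPassive_of_exchange {e f : P.EB} (he : e ∈ T) {u v x y : P.W}
    (hends : P.endsB e = s(u, v)) (hf : P.endsB f = s(x, y)) (hu : x < u) (hv : x < v)
    (hxy : ¬ Reachable P.endsB (T.erase e) x y) : P.InternallyPassive ord T e :=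
  ⟨he, f, hord f e (P.lexEnds_lt_of_lt_of_lt hends hf hu hv), hT.exchange hends hf hxy⟩

theorem internallyPassive_eS (a : {a : Fin P.m // a ∈ P.S}) (he : P.eS a ∈ T) :
    P.InternallyPassive ord T (P.eS a) := by
  have hsep := hT.1 _ he _ _ (P.endsB_eS a)
  by_cases h0 : Reachable P.endsB (T.erase (P.eS a)) ⊥ (P.liftW (P.liftV (P.aVert a.1)))
  · exact internallyPassive_of_exchange hord hT he (P.endsB_eS a) P.endsB_e00
      (P.bot_lt_liftW _) (P.bot_lt_liftW _) fun h => hsep (h.symm.trans h0)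
  · exact internallyPassive_of_exchange hord hT he (P.endsB_eS a) (P.endsB_eA a.1)
      (P.bot_lt_liftW _) (P.bot_lt_liftW _) h0

theorem internallyPassive_eG (e : P.E) (he : P.eG e ∈ T) :
    P.InternallyPassive ord T (P.eG e) := by
  obtain ⟨x, y, hxy⟩ : ∃ x y, P.ends e = s(x, y) := (P.ends e).ind fun x y => ⟨x, y, rfl⟩
  wlog h0 : ¬ Reachable P.endsB (T.erase (P.eG e)) ⊥ (P.liftW (P.liftV y)) generalizing x y
  · have hsep := hT.1 _ he _ _ (P.endsB_eG hxy)
    exact this y x (hxy.trans Sym2.eq_swap) fun h => hsep (h.symm.trans (not_not.mp h0))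
  have hends := P.endsB_eG hxy
  obtain a | b := y
  · exact internallyPassive_of_exchange hord hT he hends (P.endsB_eA a)
      (P.bot_lt_liftW _) (P.bot_lt_liftW _) h0
  · by_cases h0b :
        Reachable P.endsB (T.erase (P.eG e)) (P.liftW ⊥) (P.liftW (P.liftV (P.bVert b)))
    · exact internallyPassive_of_exchange hord hT he hends P.endsB_e00
        (P.bot_lt_liftW _) (P.bot_lt_liftW _) fun h => h0 (h.trans h0b)
    · exact internallyPassive_of_exchange hord hT he hends (P.endsB_eB b)
        (P.liftW_bot_lt_liftW_liftV _) (P.liftW_bot_lt_liftW_liftV _) h0b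

end BiconedGraph

/-- Let `G^{A,B}` be a biconed graph and `T` any spanning
tree of `G^{A,B}`.  Then every edge of `T` that does not belong to `T₀` is
internally passive in `T`. -/
theorem edge_not_in_T0_passive (P : BiconedGraph)
    (ord : LinearOrder P.EB) (hord : P.AdmissibleOrder ord)
    (T : Finset P.EB) (hT : IsSpanningTree P.endsB T)
    (e : P.EB) (heT : e ∈ T) (he0 : e ∉ P.T0) :
    P.InternallyPassive ord T e := by
  rcases e with _ | _ | _ | a | e
  iterate 3 exact absurd (Finset.mem_filter.mpr ⟨Finset.mem_univ _, trivial⟩) he0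
  · exact BiconedGraph.internallyPassive_eS hord hT a heT
  · exact BiconedGraph.internallyPassive_eG hord hT e heT

end

end BiconedPaper
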